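/- Bounding iteration numbers: for every sequence of channel actions σ over Σ and every word x, there exist natural numbers ℓ and L with ℓ ≤ L ≤ |x|·(|rea(σ)|+1) such that pr[σ^ℓ](x) ⊑ pr[σ^{L+1}](x). In particular, the iteration number L(σ,x) — the least L ∈ ℕ for which some ℓ ≤ L satisfies pr[σ^ℓ](x) ⊑ pr[σ^{L+1}](x) — satisfies L(σ,x) ≤ |x|·(|rea(σ)|+1). -/

import Mathlib

open List
/-- `wpow u k` is the word `u` concatenated `k` times. -/
def wpow {β : Type*} (u : List β) (k : ℕ) : List β := (List.replicate k u).flatten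

/-- Auxiliary residual operation, working on reversed words. -/
def resAux {α : Type*} [DecidableEq α] : List α → List α → List α
  | xr, [] => xr
  | [], _ :: _ => []
  | a :: xr, b :: vr => if a = b then resAux xr vr else resAux (a :: xr) vr
termination_by xr vr => vr.length

/-- The residual `x / v`: the prefix of `x` obtained by removing from `x`
its longest suffix that is a subword of `v`. -/
def res {α : Type*} [DecidableEq α] (x v : List α) : List α :=
  (resAux x.reverse v.reverse).reverse

inductive Act (α : Type*) where
  | write : List α → Act α
  | read : List α → Act α

/-- written part -/
def wri {α : Type*} : List (Act α) → List α
  | [] => []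
  | Act.write w :: σ => w ++ wri σ
  | Act.read _ :: σ => wri σ

/-- read part -/
def rea {α : Type*} : List (Act α) → List α
  | [] => []
  | Act.write _ :: σ => rea σ
  | Act.read w :: σ => w ++ rea σ

/-- `pr σ x` : minimal `σ`-predecessor of `x` (processing `σ` right-to-left). -/
def pr {α : Type*} [DecidableEq α] : List (Act α) → List α → List α
  | [], x => x
  | Act.write v :: σ, x => res (pr σ x) v
  | Act.read u :: σ, x => u ++ pr σ x

/-- lossy step for a single channel action -/
def stepAct {α : Type*} : Act α → List α → List α → Prop
  | Act.write w, x, y => y <+ x ++ w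
  | Act.read w, x, y => w ++ y <+ x

/-- lossy steps along a sequence of channel actions -/
def steps {α : Type*} : List (Act α) → List α → List α → Prop
  | [], x, y => x = y
  | θ :: σ, x, y => ∃ z, stepAct θ x z ∧ steps σ z y

/-- `w` is a fractional power of `u` -/
def FracPow {α : Type*} (u w : List α) : Prop := ∃ k : ℕ, w <+: wpow u k

/-- `x ⊖ u` : remainder of `x` after reading the leftmost embedding of `u`. -/
def ominus {α : Type*} [DecidableEq α] : List α → List α → List α
  | x, [] => x
  | [], _ :: _ => []
  | a :: x, b :: u => if a = b then ominus x u else ominus x (b :: u)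

/-- `σ` is increasing -/
def Increasing {α : Type*} (σ : List (Act α)) : Prop :=
  0 < (wri σ).length ∧
    wpow (rea σ) (wri σ).length <+ wpow (wri σ) ((wri σ).length - 1)

/-! Write `p k = pr[σ^k](x)` and `r = rea(σ)`. Each `p (k+1)` is a prefix of `r ++ p k`, and it is
all of `r ++ p k` only when `p k ⊑ p (k+1)`. So while no step is increasing, every step loses at
least one letter against `r ++ p k`, giving `|p k| + k ≤ |x| + k·|r|`. From `k = |x|` on, `p k` is
then short enough to be a prefix of `r^k`; consecutive terms are thus prefixes of a common power
of `r`, and a non-increasing step must strictly shorten the word. Since `|p |x|| ≤ |x|·|r|`, this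
can happen at most `|x|·|r|` times in a row. -/

lemma resAux_suffix {α : Type*} [DecidableEq α] : ∀ xr vr : List α, resAux xr vr <:+ xr
  | _, [] => by rw [resAux]
  | [], _ :: _ => by rw [resAux]
  | a :: xr, b :: vr => by
    rw [resAux]
    split
    · exact (resAux_suffix xr vr).trans (suffix_cons a xr)
    · exact resAux_suffix (a :: xr) vr
termination_by _ vr => vr.length

lemma res_prefix {α : Type*} [DecidableEq α] (x v : List α) : res x v <+: x := by
  simpa [res] using List.reverse_prefix.mpr (resAux_suffix x.reverse v.reverse)

lemma pr_append {α : Type*} [DecidableEq α] (σ₁ σ₂ : List (Act α)) (x : List α) :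
    pr (σ₁ ++ σ₂) x = pr σ₁ (pr σ₂ x) := by
  induction σ₁ with
  | nil => rfl
  | cons a σ ih => cases a <;> simp [pr, ih]

lemma pr_prefix_rea_append {α : Type*} [DecidableEq α] (σ : List (Act α)) (x : List α) :
    pr σ x <+: rea σ ++ x := by
  induction σ with
  | nil => exact prefix_refl x
  | cons a σ ih =>
    cases a with
    | write v => exact (res_prefix (pr σ x) v).trans ih
    | read u => simpa [pr, rea, List.append_assoc] using (prefix_append_right_inj u).mpr ih

section wpow

variable {β : Type*} (u : List β) (k : ℕ)

lemma wpow_succ : wpow u (k + 1) = u ++ wpow u k := by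
  simp [wpow, List.replicate_succ]

lemma wpow_succ' : wpow u (k + 1) = wpow u k ++ u := by
  simp [wpow, List.replicate_succ']

lemma length_wpow : (wpow u k).length = k * u.length := by
  induction k with
  | zero => simp [wpow]
  | succ k ih => rw [wpow_succ, List.length_append, ih, Nat.succ_mul, Nat.add_comm]

lemma wpow_prefix_wpow_succ : wpow u k <+: wpow u (k + 1) := by
  rw [wpow_succ']
  exact prefix_append _ _

end wpow

lemma length_lt_of_prefix_append_of_not_sublist {β : Type*} {l l' r : List β}
    (h : l' <+: r ++ l) (hl : ¬ l <+ l') : l'.length < r.length + l.length := by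
  by_contra! hlen
  have : l' = r ++ l := h.eq_of_length (le_antisymm h.length_le (by simpa using hlen))
  exact hl (this ▸ sublist_append_right r l)

section PrefixSequence

variable {β : Type*} {r : List β} {p : ℕ → List β}

lemma prefix_wpow_append_of_prefix_append (hp : ∀ k, p (k + 1) <+: r ++ p k) (k : ℕ) :
    p k <+: wpow r k ++ p 0 := by
  induction k with
  | zero => exact prefix_refl _
  | succ k ih =>
    rw [wpow_succ, List.append_assoc]
    exact (hp k).trans ((prefix_append_right_inj r).mpr ih)

variable {N : ℕ} (hp : ∀ k, p (k + 1) <+: r ++ p k) (hN : ∀ k < N, ¬ p k <+ p (k + 1))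
include hp hN

lemma length_add_le_of_not_sublist {k : ℕ} (hk : k ≤ N) :
    (p k).length + k ≤ (p 0).length + k * r.length := by
  induction k with
  | zero => simp
  | succ k ih =>
    have := length_lt_of_prefix_append_of_not_sublist (hp k) (hN k hk)
    have := ih (by omega)
    rw [Nat.succ_mul]
    omega

lemma prefix_wpow_of_not_sublist {k : ℕ} (h0 : (p 0).length ≤ k) (hk : k ≤ N) :
    p k <+: wpow r k :=
  prefix_of_prefix_length_le (prefix_wpow_append_of_prefix_append hp k) (prefix_append _ _)
    (by have := length_add_le_of_not_sublist hp hN hk; rw [length_wpow]; omega)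

lemma length_succ_lt_of_not_sublist {k : ℕ} (h0 : (p 0).length ≤ k) (hk : k < N) :
    (p (k + 1)).length < (p k).length := by
  by_contra! hlen
  have hk' : p k <+: wpow r (k + 1) :=
    (prefix_wpow_of_not_sublist hp hN h0 hk.le).trans (wpow_prefix_wpow_succ r k)
  have hk'' : p (k + 1) <+: wpow r (k + 1) := prefix_wpow_of_not_sublist hp hN (by omega) hk
  exact hN k hk (prefix_of_prefix_length_le hk' hk'' hlen).sublist

end PrefixSequence

theorem exists_le_sublist_succ_of_prefix_append {β : Type*} {r : List β} {p : ℕ → List β}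
    (hp : ∀ k, p (k + 1) <+: r ++ p k) :
    ∃ k ≤ (p 0).length * (r.length + 1), p k <+ p (k + 1) := by
  by_contra! hc
  set n := (p 0).length
  have hmul : n * (r.length + 1) = n * r.length + n := Nat.mul_succ n r.length
  have hN : ∀ k < n * (r.length + 1) + 1, ¬ p k <+ p (k + 1) := fun k hk => hc k (by omega)
  have hshrink : ∀ j ≤ n * r.length + 1, (p (n + j)).length + j ≤ (p n).length := by
    intro j hj
    induction j with
    | zero => simp
    | succ j ih =>
      have := length_succ_lt_of_not_sublist hp hN (k := n + j) le_self_add (by omega)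
      have := ih (by omega)
      show (p (n + j + 1)).length + (j + 1) ≤ (p n).length
      omega
  have hstart := length_add_le_of_not_sublist hp hN (k := n) (by omega)
  have hend := hshrink (n * r.length + 1) le_rfl
  omega

/-- bounding iteration numbers: there are `ℓ ≤ L ≤ |x|·(|rea σ|+1)`
with `pr[σ^ℓ](x) ⊑ pr[σ^{L+1}](x)`; in particular the iteration number
`L(σ,x)` is at most `|x|·(|rea σ|+1)`. -/
theorem iteration_number_bound {α : Type*} [DecidableEq α]
    (σ : List (Act α)) (x : List α) :
    (∃ ℓ L : ℕ, ℓ ≤ L ∧ L ≤ x.length * ((rea σ).length + 1) ∧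
      pr (wpow σ ℓ) x <+ pr (wpow σ (L + 1)) x) ∧
    sInf {L : ℕ | ∃ ℓ ≤ L, pr (wpow σ ℓ) x <+ pr (wpow σ (L + 1)) x} ≤
      x.length * ((rea σ).length + 1) := by
  have hstep (k : ℕ) : pr (wpow σ (k + 1)) x <+: rea σ ++ pr (wpow σ k) x := by
    rw [wpow_succ, pr_append]
    exact pr_prefix_rea_append σ _
  obtain ⟨k, hk, hsub⟩ :=
    exists_le_sublist_succ_of_prefix_append (p := fun k => pr (wpow σ k) x) hstep
  exact ⟨⟨k, k, le_rfl, hk, hsub⟩, le_trans (Nat.sInf_le ⟨k, le_rfl, hsub⟩) hk⟩
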